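/- The pair (A, φ) is a left H-comodule algebra: (ε_H ⊗ id_A) ∘ φ = id_A; (Δ_H ⊗ id_A) ∘ φ = (id_H ⊗ φ) ∘ φ; φ(a a') = φ(a)·φ(a') in the tensor-product algebra H ⊗ A for all a, a' ∈ A; and φ(1_A) = 1_H ⊗ 1_A. -/
import Mathlib


open TensorProduct

noncomputable section

universe u

variable {k A H X : Type u} [Field k]
  [Ring A] [Ring H] [Ring X]
  [Bialgebra k A] [Bialgebra k H] [Bialgebra k X]

/-- ζ := (p_H ⊗ p_A) ∘ Δ_X ∘ ξ⁻¹ : A ⊗ H → H ⊗ A. -/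
def zetaC (pA : X →ₐc[k] A) (pH : X →ₐc[k] H) (ξ : X ≃ₗ[k] A ⊗[k] H) :
    A ⊗[k] H →ₗ[k] H ⊗[k] A :=
  TensorProduct.map (pH : X →ₗ[k] H) (pA : X →ₗ[k] A) ∘ₗ
    (Coalgebra.comul : X →ₗ[k] X ⊗[k] X) ∘ₗ ξ.symm.toLinearMap

/-- φ : A → H ⊗ A, φ(a) := ζ(a ⊗ 1_H). -/
def phiC (pA : X →ₐc[k] A) (pH : X →ₐc[k] H) (ξ : X ≃ₗ[k] A ⊗[k] H) :
    A →ₗ[k] H ⊗[k] A :=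
  zetaC pA pH ξ ∘ₗ (TensorProduct.mk k A H).flip (1 : H)

/-- ψ : H → H ⊗ A, ψ(h) := ζ(1_A ⊗ h). -/
def psiC (pA : X →ₐc[k] A) (pH : X →ₐc[k] H) (ξ : X ≃ₗ[k] A ⊗[k] H) :
    H →ₗ[k] H ⊗[k] A :=
  zetaC pA pH ξ ∘ₗ TensorProduct.mk k A H (1 : A)

namespace CoFactAux

variable (pA : X →ₐc[k] A) (pH : X →ₐc[k] H) (ξ : X ≃ₗ[k] A ⊗[k] H)

lemma phiC_apply (a : A) : phiC pA pH ξ a = zetaC pA pH ξ (a ⊗ₜ[k] (1 : H)) := rfl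

lemma zetaC_xi (x : X) :
    zetaC pA pH ξ (ξ x)
      = TensorProduct.map (pH : X →ₗ[k] H) (pA : X →ₗ[k] A) (Coalgebra.comul x) := by
  simp [zetaC]

lemma comul_compat :
    TensorProduct.map (pH : X →ₗ[k] H) (pH : X →ₗ[k] H) ∘ₗ
        (Coalgebra.comul : X →ₗ[k] X ⊗[k] X)
      = (Coalgebra.comul : H →ₗ[k] H ⊗[k] H) ∘ₗ (pH : X →ₗ[k] H) :=
  CoalgHomClass.map_comp_comul pH

lemma counit_compat :
    (Coalgebra.counit : H →ₗ[k] k) ∘ₗ (pH : X →ₗ[k] H)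
      = (Coalgebra.counit : X →ₗ[k] k) :=
  CoalgHomClass.counit_comp pH

/-- multiplicativity of `(f ⊗ g) ∘ Δ` for bialgebra maps `f`, `g`. -/
lemma map_comul_mul {A' H' : Type u} [Ring A'] [Ring H'] [Bialgebra k A'] [Bialgebra k H']
    (f : X →ₐc[k] A') (g : X →ₐc[k] H') (x y : X) :
    TensorProduct.map (f : X →ₗ[k] A') (g : X →ₗ[k] H') (Coalgebra.comul (x * y))
      = TensorProduct.map (f : X →ₗ[k] A') (g : X →ₗ[k] H') (Coalgebra.comul x)
        * TensorProduct.map (f : X →ₗ[k] A') (g : X →ₗ[k] H') (Coalgebra.comul y) := by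
  have hmul : ∀ u v : X ⊗[k] X,
      TensorProduct.map (f : X →ₗ[k] A') (g : X →ₗ[k] H') (u * v)
        = TensorProduct.map (f : X →ₗ[k] A') (g : X →ₗ[k] H') u
          * TensorProduct.map (f : X →ₗ[k] A') (g : X →ₗ[k] H') v := by
    intro u v
    induction u with
    | zero => rw [zero_mul, map_zero, zero_mul]
    | add u₁ u₂ h₁ h₂ => rw [add_mul, map_add, map_add, add_mul, h₁, h₂]
    | tmul x₁ x₂ =>
      induction v with
      | zero => rw [mul_zero, map_zero, mul_zero]
      | add v₁ v₂ h₁ h₂ => rw [mul_add, map_add, map_add, mul_add, h₁, h₂]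
      | tmul y₁ y₂ =>
        rw [Algebra.TensorProduct.tmul_mul_tmul, TensorProduct.map_tmul,
          TensorProduct.map_tmul, TensorProduct.map_tmul,
          Algebra.TensorProduct.tmul_mul_tmul]
        show f (x₁ * y₁) ⊗ₜ[k] g (x₂ * y₂)
          = (f x₁ * f y₁) ⊗ₜ[k] (g x₂ * g y₂)
        rw [map_mul, map_mul]
  rw [Bialgebra.comul_mul, hmul]

lemma map_one_one {A' H' : Type u} [Ring A'] [Ring H'] [Bialgebra k A'] [Bialgebra k H']
    (f : X →ₐc[k] A') (g : X →ₐc[k] H') :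
    TensorProduct.map (f : X →ₗ[k] A') (g : X →ₗ[k] H') (Coalgebra.comul (1 : X))
      = (1 : A') ⊗ₜ[k] (1 : H') := by
  rw [Bialgebra.comul_one, Algebra.TensorProduct.one_def, TensorProduct.map_tmul]
  show f 1 ⊗ₜ[k] g 1 = 1 ⊗ₜ[k] 1
  rw [map_one, map_one]

variable (hξ : ∀ x : X, ξ x = TensorProduct.map (pA : X →ₗ[k] A) (pH : X →ₗ[k] H)
      (Coalgebra.comul x))
include hξ

lemma zetaC_comp :
    zetaC pA pH ξ ∘ₗ (TensorProduct.map (pA : X →ₗ[k] A) (pH : X →ₗ[k] H) ∘ₗ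
      (Coalgebra.comul : X →ₗ[k] X ⊗[k] X))
    = TensorProduct.map (pH : X →ₗ[k] H) (pA : X →ₗ[k] A) ∘ₗ
      (Coalgebra.comul : X →ₗ[k] X ⊗[k] X) := by
  apply LinearMap.ext; intro x
  simp only [LinearMap.comp_apply]
  rw [← hξ x, zetaC_xi]

/-- the key identity (∗). -/
lemma starC (x : X) :
    LinearMap.rTensor A (Coalgebra.comul : H →ₗ[k] H ⊗[k] H)
        (TensorProduct.map (pH : X →ₗ[k] H) (pA : X →ₗ[k] A) (Coalgebra.comul x))
      = (TensorProduct.assoc k H H A).symm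
          (LinearMap.lTensor H (zetaC pA pH ξ)
            (TensorProduct.assoc k H A H
              (LinearMap.rTensor H (zetaC pA pH ξ)
                ((TensorProduct.assoc k A H H).symm
                  (LinearMap.lTensor A (Coalgebra.comul : H →ₗ[k] H ⊗[k] H)
                    (TensorProduct.map (pA : X →ₗ[k] A) (pH : X →ₗ[k] H)
                      (Coalgebra.comul x))))))) := by
  have h1 : LinearMap.lTensor A (Coalgebra.comul : H →ₗ[k] H ⊗[k] H)
        (TensorProduct.map (pA : X →ₗ[k] A) (pH : X →ₗ[k] H) (Coalgebra.comul x))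
      = TensorProduct.map (pA : X →ₗ[k] A)
          (TensorProduct.map (pH : X →ₗ[k] H) (pH : X →ₗ[k] H))
          (LinearMap.lTensor X (Coalgebra.comul : X →ₗ[k] X ⊗[k] X)
            (Coalgebra.comul x)) := by
    rw [← LinearMap.comp_apply, LinearMap.lTensor_comp_map,
      ← comul_compat pH, ← LinearMap.map_comp_lTensor, LinearMap.comp_apply]
  have h2 : (TensorProduct.assoc k A H H).symm
        (TensorProduct.map (pA : X →ₗ[k] A)
          (TensorProduct.map (pH : X →ₗ[k] H) (pH : X →ₗ[k] H))
          (LinearMap.lTensor X (Coalgebra.comul : X →ₗ[k] X ⊗[k] X)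
            (Coalgebra.comul x)))
      = TensorProduct.map
          (TensorProduct.map (pA : X →ₗ[k] A) (pH : X →ₗ[k] H)) (pH : X →ₗ[k] H)
          (LinearMap.rTensor X (Coalgebra.comul : X →ₗ[k] X ⊗[k] X)
            (Coalgebra.comul x)) := by
    rw [← TensorProduct.map_map_assoc_symm, Coalgebra.coassoc_symm_apply]
  have h3 : LinearMap.rTensor H (zetaC pA pH ξ)
        (TensorProduct.map
          (TensorProduct.map (pA : X →ₗ[k] A) (pH : X →ₗ[k] H)) (pH : X →ₗ[k] H)
          (LinearMap.rTensor X (Coalgebra.comul : X →ₗ[k] X ⊗[k] X)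
            (Coalgebra.comul x)))
      = TensorProduct.map
          (TensorProduct.map (pH : X →ₗ[k] H) (pA : X →ₗ[k] A)) (pH : X →ₗ[k] H)
          (LinearMap.rTensor X (Coalgebra.comul : X →ₗ[k] X ⊗[k] X)
            (Coalgebra.comul x)) := by
    rw [← LinearMap.comp_apply, LinearMap.rTensor_comp_map,
      ← LinearMap.comp_apply, LinearMap.map_comp_rTensor, LinearMap.comp_assoc,
      zetaC_comp pA pH ξ hξ, ← LinearMap.map_comp_rTensor, LinearMap.comp_apply]
  have h4 : TensorProduct.assoc k H A H
        (TensorProduct.map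
          (TensorProduct.map (pH : X →ₗ[k] H) (pA : X →ₗ[k] A)) (pH : X →ₗ[k] H)
          (LinearMap.rTensor X (Coalgebra.comul : X →ₗ[k] X ⊗[k] X)
            (Coalgebra.comul x)))
      = TensorProduct.map (pH : X →ₗ[k] H)
          (TensorProduct.map (pA : X →ₗ[k] A) (pH : X →ₗ[k] H))
          (LinearMap.lTensor X (Coalgebra.comul : X →ₗ[k] X ⊗[k] X)
            (Coalgebra.comul x)) := by
    rw [← TensorProduct.map_map_assoc, Coalgebra.coassoc_apply]
  have h5 : LinearMap.lTensor H (zetaC pA pH ξ)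
        (TensorProduct.map (pH : X →ₗ[k] H)
          (TensorProduct.map (pA : X →ₗ[k] A) (pH : X →ₗ[k] H))
          (LinearMap.lTensor X (Coalgebra.comul : X →ₗ[k] X ⊗[k] X)
            (Coalgebra.comul x)))
      = TensorProduct.map (pH : X →ₗ[k] H)
          (TensorProduct.map (pH : X →ₗ[k] H) (pA : X →ₗ[k] A))
          (LinearMap.lTensor X (Coalgebra.comul : X →ₗ[k] X ⊗[k] X)
            (Coalgebra.comul x)) := by
    rw [← LinearMap.comp_apply, LinearMap.lTensor_comp_map,
      ← LinearMap.comp_apply, LinearMap.map_comp_lTensor, LinearMap.comp_assoc,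
      zetaC_comp pA pH ξ hξ, ← LinearMap.map_comp_lTensor, LinearMap.comp_apply]
  have h6 : (TensorProduct.assoc k H H A).symm
        (TensorProduct.map (pH : X →ₗ[k] H)
          (TensorProduct.map (pH : X →ₗ[k] H) (pA : X →ₗ[k] A))
          (LinearMap.lTensor X (Coalgebra.comul : X →ₗ[k] X ⊗[k] X)
            (Coalgebra.comul x)))
      = TensorProduct.map
          (TensorProduct.map (pH : X →ₗ[k] H) (pH : X →ₗ[k] H)) (pA : X →ₗ[k] A)
          (LinearMap.rTensor X (Coalgebra.comul : X →ₗ[k] X ⊗[k] X)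
            (Coalgebra.comul x)) := by
    rw [← TensorProduct.map_map_assoc_symm, Coalgebra.coassoc_symm_apply]
  have h7 : TensorProduct.map
        (TensorProduct.map (pH : X →ₗ[k] H) (pH : X →ₗ[k] H)) (pA : X →ₗ[k] A)
        (LinearMap.rTensor X (Coalgebra.comul : X →ₗ[k] X ⊗[k] X)
          (Coalgebra.comul x))
      = LinearMap.rTensor A (Coalgebra.comul : H →ₗ[k] H ⊗[k] H)
          (TensorProduct.map (pH : X →ₗ[k] H) (pA : X →ₗ[k] A)
            (Coalgebra.comul x)) := by
    rw [← LinearMap.comp_apply, LinearMap.map_comp_rTensor,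
      comul_compat pH, ← LinearMap.rTensor_comp_map, LinearMap.comp_apply]
  rw [h1, h2, h3, h4, h5, h6, h7]

end CoFactAux

open CoFactAux in
/-- (A, φ) is a left H-comodule algebra. -/
theorem phi_comodule_algebra (pA : X →ₐc[k] A) (pH : X →ₐc[k] H)
    (ξ : X ≃ₗ[k] A ⊗[k] H)
    (hξ : ∀ x : X, ξ x = TensorProduct.map (pA : X →ₗ[k] A) (pH : X →ₗ[k] H)
      (Coalgebra.comul x)) :
    (TensorProduct.lid k A).toLinearMap ∘ₗ
        TensorProduct.map (Coalgebra.counit : H →ₗ[k] k) LinearMap.id ∘ₗ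
        phiC pA pH ξ
      = LinearMap.id ∧
    TensorProduct.map (Coalgebra.comul : H →ₗ[k] H ⊗[k] H) LinearMap.id ∘ₗ
        phiC pA pH ξ
      = (TensorProduct.assoc k H H A).symm.toLinearMap ∘ₗ
        TensorProduct.map LinearMap.id (phiC pA pH ξ) ∘ₗ phiC pA pH ξ ∧
    (∀ a a' : A, phiC pA pH ξ (a * a') = phiC pA pH ξ a * phiC pA pH ξ a') ∧
    phiC pA pH ξ (1 : A) = (1 : H) ⊗ₜ[k] (1 : A) := by
  have hax : ∀ a : A, TensorProduct.map (pA : X →ₗ[k] A) (pH : X →ₗ[k] H)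
      (Coalgebra.comul (ξ.symm (a ⊗ₜ[k] (1 : H)))) = a ⊗ₜ[k] (1 : H) := by
    intro a
    rw [← hξ, ξ.apply_symm_apply]
  have hφ : ∀ a : A, phiC pA pH ξ a
      = TensorProduct.map (pH : X →ₗ[k] H) (pA : X →ₗ[k] A)
          (Coalgebra.comul (ξ.symm (a ⊗ₜ[k] (1 : H)))) := by
    intro a
    rw [phiC_apply]
    conv_lhs => rw [← ξ.apply_symm_apply (a ⊗ₜ[k] (1 : H))]
    rw [zetaC_xi]
  refine ⟨?_, ?_, ?_, ?_⟩
  · -- counit property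
    apply LinearMap.ext; intro a
    have ha : (pA : X →ₗ[k] A) (ξ.symm (a ⊗ₜ[k] (1 : H))) = a := by
      have h0 := congrArg (fun u => (TensorProduct.rid k A)
        (LinearMap.lTensor A (Coalgebra.counit : H →ₗ[k] k) u)) (hax a)
      rw [← LinearMap.comp_apply (LinearMap.lTensor A _), LinearMap.lTensor_comp_map,
        counit_compat pH, ← LinearMap.rTensor_comp_lTensor, LinearMap.comp_apply,
        Coalgebra.lTensor_counit_comul, LinearMap.rTensor_tmul,
        TensorProduct.rid_tmul, one_smul, LinearMap.lTensor_tmul,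
        TensorProduct.rid_tmul, Bialgebra.counit_one, one_smul] at h0
      exact h0
    simp only [LinearMap.comp_apply, LinearEquiv.coe_coe, LinearMap.id_apply]
    rw [hφ a, ← LinearMap.comp_apply (TensorProduct.map _ _),
      ← TensorProduct.map_comp, counit_compat pH, LinearMap.id_comp,
      ← LinearMap.lTensor_comp_rTensor, LinearMap.comp_apply,
      Coalgebra.rTensor_counit_comul, LinearMap.lTensor_tmul,
      TensorProduct.lid_tmul, one_smul]
    exact ha
  · -- coassociativity
    apply LinearMap.ext; intro a
    simp only [LinearMap.comp_apply, LinearEquiv.coe_coe]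
    have hstar := starC pA pH ξ hξ (ξ.symm (a ⊗ₜ[k] (1 : H)))
    rw [hax a] at hstar
    have e1 : LinearMap.lTensor A (Coalgebra.comul : H →ₗ[k] H ⊗[k] H)
        (a ⊗ₜ[k] (1 : H)) = a ⊗ₜ[k] ((1 : H) ⊗ₜ[k] (1 : H)) := by
      rw [LinearMap.lTensor_tmul, Bialgebra.comul_one, Algebra.TensorProduct.one_def]
    have e2 : (TensorProduct.assoc k A H H).symm
        (a ⊗ₜ[k] ((1 : H) ⊗ₜ[k] (1 : H))) = (a ⊗ₜ[k] (1 : H)) ⊗ₜ[k] (1 : H) := rfl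
    have e3 : LinearMap.rTensor H (zetaC pA pH ξ)
        ((a ⊗ₜ[k] (1 : H)) ⊗ₜ[k] (1 : H)) = phiC pA pH ξ a ⊗ₜ[k] (1 : H) := by
      rw [LinearMap.rTensor_tmul, phiC_apply]
    have e4 : ∀ u : H ⊗[k] A,
        LinearMap.lTensor H (zetaC pA pH ξ) (TensorProduct.assoc k H A H
          (u ⊗ₜ[k] (1 : H)))
        = TensorProduct.map LinearMap.id (phiC pA pH ξ) u := by
      intro u
      induction u with
      | zero =>
        rw [TensorProduct.zero_tmul, LinearEquiv.map_zero, LinearMap.map_zero,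
          LinearMap.map_zero]
      | add u₁ u₂ h₁ h₂ =>
        rw [TensorProduct.add_tmul, map_add, map_add, map_add, h₁, h₂]
      | tmul h' a' =>
        rw [TensorProduct.assoc_tmul, LinearMap.lTensor_tmul, TensorProduct.map_tmul,
          LinearMap.id_apply, phiC_apply]
    rw [e1, e2, e3, e4] at hstar
    rw [← hφ a] at hstar
    have hLHS : TensorProduct.map (Coalgebra.comul : H →ₗ[k] H ⊗[k] H)
        (LinearMap.id : A →ₗ[k] A) (phiC pA pH ξ a)
        = LinearMap.rTensor A (Coalgebra.comul : H →ₗ[k] H ⊗[k] H)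
          (phiC pA pH ξ a) := rfl
    rw [hLHS]
    exact hstar
  · -- multiplicativity
    intro a a'
    have hmul : (a * a') ⊗ₜ[k] (1 : H)
        = TensorProduct.map (pA : X →ₗ[k] A) (pH : X →ₗ[k] H)
            (Coalgebra.comul (ξ.symm (a ⊗ₜ[k] (1 : H))
              * ξ.symm (a' ⊗ₜ[k] (1 : H)))) := by
      rw [map_comul_mul, hax a, hax a', Algebra.TensorProduct.tmul_mul_tmul, one_mul]
    rw [phiC_apply, hmul]
    have hz := LinearMap.congr_fun (zetaC_comp pA pH ξ hξ)
      (ξ.symm (a ⊗ₜ[k] (1 : H)) * ξ.symm (a' ⊗ₜ[k] (1 : H)))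
    simp only [LinearMap.comp_apply] at hz
    rw [hz, map_comul_mul, ← hφ a, ← hφ a']
  · -- unit
    have h1 : ξ (1 : X) = (1 : A) ⊗ₜ[k] (1 : H) := by
      rw [hξ, map_one_one]
    rw [phiC_apply, ← h1, zetaC_xi, map_one_one]
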